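/- Let B be a unital C*-algebra, A a norm-closed unital subalgebra of B containing the unit of B, and q ∈ B** a projection. The following are equivalent: (1) q lies in the weak*-closure of A in B**; (2) q ∈ A^⊥⊥; (3) A^⊥ ⊆ (qA)_⊥ (respectively, A^⊥ ⊆ (Aq)_⊥); (4) A^⊥ ⊆ (qAq)_⊥; (5) for every μ ∈ A^⊥ one has μq ∈ A^⊥ (respectively, qμ ∈ A^⊥); (6) for every μ ∈ A^⊥ one has qμq ∈ A^⊥. -/

import Mathlib

set_option linter.unusedSectionVars false
set_option synthInstance.maxHeartbeats 400000

/- Common definitions: bidual of a (C*-)algebra, Arens product, annihilators,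
open/closed projections, multiplier algebras, strict topology, etc. -/

noncomputable section

open Filter Topology ComplexConjugate Pointwise

/-- The topological dual of a seminormed space `E` (as in the older Mathlib, now removed). -/
abbrev NormedSpace.Dual (𝕜 : Type*) [RCLike 𝕜] (E : Type*) [SeminormedAddCommGroup E]
    [NormedSpace 𝕜 E] : Type _ := E →L[𝕜] 𝕜

namespace OAPaper

variable {B : Type} [NonUnitalNormedRing B]
  [NormedSpace ℂ B] [IsScalarTower ℂ B B] [SMulCommClass ℂ B B]

/-- The dual space `B*`. -/
abbrev Dl (B : Type) [NonUnitalNormedRing B] [NormedSpace ℂ B] : Type :=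
  NormedSpace.Dual ℂ B

/-- The bidual `B**`. -/
abbrev Bidual (B : Type) [NonUnitalNormedRing B] [NormedSpace ℂ B] : Type :=
  NormedSpace.Dual ℂ (NormedSpace.Dual ℂ B)

/-- The canonical embedding of `B` into its bidual. -/
def jj : B →L[ℂ] Bidual B := NormedSpace.inclusionInDoubleDual ℂ B

lemma norm_jj_apply_le (b : B) : ‖jj b‖ ≤ ‖b‖ := by
  have h1 := (jj (B := B)).le_opNorm b
  have h2 : ‖jj (B := B)‖ ≤ 1 := NormedSpace.inclusionInDoubleDual_norm_le ℂ B
  nlinarith [norm_nonneg b, norm_nonneg (jj b)]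

/-- `fA f a = f(a·)`. -/
def fA (f : Dl B) (a : B) : Dl B := f.comp (ContinuousLinearMap.mul ℂ B a)

@[simp] lemma fA_apply (f : Dl B) (a b : B) : fA f a b = f (a * b) := rfl

lemma fA_norm_le (f : Dl B) (a : B) : ‖fA f a‖ ≤ ‖f‖ * ‖a‖ :=
  ContinuousLinearMap.opNorm_le_bound _ (by positivity) fun b => by
    calc ‖f (a * b)‖ ≤ ‖f‖ * ‖a * b‖ := f.le_opNorm _
    _ ≤ ‖f‖ * (‖a‖ * ‖b‖) := by gcongr; exact norm_mul_le a b
    _ = ‖f‖ * ‖a‖ * ‖b‖ := (mul_assoc _ _ _).symm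

lemma fA_add_left (f g : Dl B) (a : B) : fA (f + g) a = fA f a + fA g a := by
  ext b; simp [fA]

lemma fA_smul_left (c : ℂ) (f : Dl B) (a : B) : fA (c • f) a = c • fA f a := by
  ext b; simp [fA]

/-- `nF n f = n(f(a·))` as a functional of `a`. -/
def nF (n : Bidual B) (f : Dl B) : Dl B :=
  LinearMap.mkContinuous
    { toFun := fun a => n (fA f a)
      map_add' := fun a b => by
        have h : fA f (a + b) = fA f a + fA f b := by ext c; simp [add_mul]
        (try dsimp only); rw [h, map_add]
      map_smul' := fun c a => by
        have h : fA f (c • a) = c • fA f a := by ext d; simp [smul_mul_assoc]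
        (try dsimp only); rw [h, ContinuousLinearMap.map_smul]; simp }
    (‖n‖ * ‖f‖)
    (fun a => by
      calc ‖n (fA f a)‖ ≤ ‖n‖ * ‖fA f a‖ := n.le_opNorm _
      _ ≤ ‖n‖ * (‖f‖ * ‖a‖) := by gcongr; exact fA_norm_le f a
      _ = ‖n‖ * ‖f‖ * ‖a‖ := (mul_assoc _ _ _).symm)

@[simp] lemma nF_apply (n : Bidual B) (f : Dl B) (a : B) : nF n f a = n (fA f a) := rfl

lemma nF_norm_le (n : Bidual B) (f : Dl B) : ‖nF n f‖ ≤ ‖n‖ * ‖f‖ :=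
  LinearMap.mkContinuous_norm_le _ (by positivity) _

lemma nF_add_right (n : Bidual B) (f g : Dl B) : nF n (f + g) = nF n f + nF n g := by
  ext a; simp [fA_add_left]

lemma nF_smul_right (n : Bidual B) (c : ℂ) (f : Dl B) : nF n (c • f) = c • nF n f := by
  ext a; simp [fA_smul_left]

lemma nF_add_left (m n : Bidual B) (f : Dl B) : nF (m + n) f = nF m f + nF n f := by
  ext a; simp

lemma nF_smul_left (c : ℂ) (n : Bidual B) (f : Dl B) : nF (c • n) f = c • nF n f := by
  ext a; simp

lemma nF_zero_left (f : Dl B) : nF (0 : Bidual B) f = 0 := by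
  ext a; simp

/-- The (first) Arens product on the bidual `B**`. -/
def arens (m n : Bidual B) : Bidual B :=
  LinearMap.mkContinuous
    { toFun := fun f => m (nF n f)
      map_add' := fun f g => by (try dsimp only); rw [nF_add_right, map_add]
      map_smul' := fun c f => by
        (try dsimp only); rw [nF_smul_right, ContinuousLinearMap.map_smul]; simp }
    (‖m‖ * ‖n‖)
    (fun f => by
      calc ‖m (nF n f)‖ ≤ ‖m‖ * ‖nF n f‖ := m.le_opNorm _
      _ ≤ ‖m‖ * (‖n‖ * ‖f‖) := by gcongr; exact nF_norm_le n f
      _ = ‖m‖ * ‖n‖ * ‖f‖ := (mul_assoc _ _ _).symm)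

@[simp] lemma arens_apply (m n : Bidual B) (f : Dl B) : arens m n f = m (nF n f) := rfl

lemma arens_norm_le (m n : Bidual B) : ‖arens m n‖ ≤ ‖m‖ * ‖n‖ :=
  LinearMap.mkContinuous_norm_le _ (by positivity) _

lemma arens_add_left (m₁ m₂ n : Bidual B) :
    arens (m₁ + m₂) n = arens m₁ n + arens m₂ n := by ext f; simp

lemma arens_smul_left (c : ℂ) (m n : Bidual B) :
    arens (c • m) n = c • arens m n := by ext f; simp

lemma arens_add_right (m n₁ n₂ : Bidual B) :
    arens m (n₁ + n₂) = arens m n₁ + arens m n₂ := by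
  ext f; simp [nF_add_left]

lemma arens_smul_right (c : ℂ) (m n : Bidual B) :
    arens m (c • n) = c • arens m n := by
  ext f; simp [nF_smul_left]

lemma arens_zero_left (n : Bidual B) : arens (0 : Bidual B) n = 0 := by ext f; simp

lemma arens_zero_right (m : Bidual B) : arens m (0 : Bidual B) = 0 := by
  ext f; simp [nF_zero_left]

section StarPart

variable [StarRing B] [CStarRing B] [StarModule ℂ B]

/-- The adjoint of a functional: `(dstar f)(a) = conj (f (a*))`. -/
def dstar (f : Dl B) : Dl B :=
  LinearMap.mkContinuous
    { toFun := fun a => conj (f (star a))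
      map_add' := fun a b => by simp [star_add]
      map_smul' := fun c a => by
        simp [star_smul, Complex.star_def, smul_eq_mul, map_mul] }
    ‖f‖
    (fun a => by
      calc ‖conj (f (star a))‖ = ‖f (star a)‖ := RCLike.norm_conj _
      _ ≤ ‖f‖ * ‖star a‖ := f.le_opNorm _
      _ = ‖f‖ * ‖a‖ := by rw [norm_star])

@[simp] lemma dstar_apply (f : Dl B) (a : B) : dstar f a = conj (f (star a)) := rfl

lemma dstar_norm_le (f : Dl B) : ‖dstar f‖ ≤ ‖f‖ :=
  LinearMap.mkContinuous_norm_le _ (norm_nonneg f) _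

lemma dstar_add (f g : Dl B) : dstar (f + g) = dstar f + dstar g := by
  ext a; simp

lemma dstar_smul (c : ℂ) (f : Dl B) : dstar (c • f) = conj c • dstar f := by
  ext a; simp [smul_eq_mul, map_mul]

/-- The involution on the bidual: `(bstar m)(f) = conj (m (dstar f))`. -/
def bstar (m : Bidual B) : Bidual B :=
  LinearMap.mkContinuous
    { toFun := fun f => conj (m (dstar f))
      map_add' := fun f g => by (try dsimp only); rw [dstar_add, map_add]; simp
      map_smul' := fun c f => by
        (try dsimp only); rw [dstar_smul, ContinuousLinearMap.map_smul]
        simp [smul_eq_mul, map_mul] }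
    ‖m‖
    (fun f => by
      calc ‖conj (m (dstar f))‖ = ‖m (dstar f)‖ := RCLike.norm_conj _
      _ ≤ ‖m‖ * ‖dstar f‖ := m.le_opNorm _
      _ ≤ ‖m‖ * ‖f‖ := by gcongr; exact dstar_norm_le f)

@[simp] lemma bstar_apply (m : Bidual B) (f : Dl B) : bstar m f = conj (m (dstar f)) := rfl

/-- A projection in the bidual: a self-adjoint idempotent for the Arens product. -/
def IsProjE (p : Bidual B) : Prop := arens p p = p ∧ bstar p = p

end StarPart

/-- The annihilator `S^⊥ ⊆ B*` of a set `S ⊆ B`. -/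
def ann (S : Set B) : Set (Dl B) := {f | ∀ a ∈ S, f a = 0}

/-- The bi-annihilator `S^⊥⊥ ⊆ B**` of a set `S ⊆ B`. -/
def biann (S : Set B) : Set (Bidual B) := {m | ∀ f ∈ ann S, m f = 0}

/-- The pre-annihilator `S_⊥ ⊆ B*` of a set `S ⊆ B**`. -/
def preAnn (S : Set (Bidual B)) : Set (Dl B) := {f | ∀ m ∈ S, m f = 0}

/-- Image of a subset of `B` in the bidual. -/
def jset (S : Set B) : Set (Bidual B) := (fun b : B => jj b) '' S

/-- `p` is an open projection in `B**`: `p` is a projection which is the weak* limit of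
an increasing net of positive elements of `B`. -/
def IsOpenP [StarRing B] [CStarRing B] [StarModule ℂ B] [PartialOrder B]
    [StarOrderedRing B] (p : Bidual B) : Prop :=
  IsProjE p ∧
    ∃ (ι : Type) (pr : Preorder ι), Nonempty ι ∧
      (∀ i k : ι, ∃ l : ι, pr.le i l ∧ pr.le k l) ∧
      ∃ e : ι → B, (∀ i k : ι, pr.le i k → e i ≤ e k) ∧ (∀ i, 0 ≤ e i) ∧
        ∀ f : Dl B, Tendsto (fun i => jj (e i) f) (@atTop ι pr) (𝓝 (p f))

/-- `D` possesses a contractive approximate identity. -/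
def HasCAI (D : Set B) : Prop :=
  ∃ (ι : Type) (pr : Preorder ι), Nonempty ι ∧
    (∀ i k : ι, ∃ l : ι, pr.le i l ∧ pr.le k l) ∧
    ∃ e : ι → B, (∀ i, e i ∈ D ∧ ‖e i‖ ≤ 1) ∧
      ∀ x ∈ D, Tendsto (fun i => e i * x) (@atTop ι pr) (𝓝 x) ∧
        Tendsto (fun i => x * e i) (@atTop ι pr) (𝓝 x)

/-- `D` possesses an approximate identity (bounded or unbounded) which is also an
approximate identity for `C`. -/
def HasJointAI (D C : Set B) : Prop :=
  ∃ (ι : Type) (pr : Preorder ι), Nonempty ι ∧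
    (∀ i k : ι, ∃ l : ι, pr.le i l ∧ pr.le k l) ∧
    ∃ e : ι → B, (∀ i, e i ∈ D) ∧
      (∀ x ∈ D, Tendsto (fun i => e i * x) (@atTop ι pr) (𝓝 x) ∧
        Tendsto (fun i => x * e i) (@atTop ι pr) (𝓝 x)) ∧
      (∀ x ∈ C, Tendsto (fun i => e i * x) (@atTop ι pr) (𝓝 x) ∧
        Tendsto (fun i => x * e i) (@atTop ι pr) (𝓝 x))

/-- Membership in the closure of `S ⊆ B**` with respect to the strict topology `β_C`
determined by `C ⊆ B`, i.e. the locally convex topology generated by the seminorms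
`η ↦ ‖ηb‖ + ‖cη‖` for `b, c ∈ C`:  every basic `β_C`-neighborhood of `x` meets `S`. -/
def inStrictClosure (C : Set B) (S : Set (Bidual B)) (x : Bidual B) : Prop :=
  ∀ F : Finset (B × B), (∀ bc ∈ F, bc.1 ∈ C ∧ bc.2 ∈ C) → ∀ ε : ℝ, 0 < ε →
    ∃ s ∈ S, ∀ bc ∈ F,
      ‖arens (x - s) (jj bc.1)‖ + ‖arens (jj bc.2) (x - s)‖ < ε

/-- The multiplier algebra `M(C) = {η ∈ C** : ηC ⊆ C and Cη ⊆ C}`, realized inside `B**`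
(identifying `C**` with the bi-annihilator `C^⊥⊥` of `C` in `B**`). -/
def mult (C : Set B) : Set (Bidual B) :=
  {η | η ∈ biann C ∧ (∀ c ∈ C, ∃ c' ∈ C, arens η (jj c) = jj c') ∧
    (∀ c ∈ C, ∃ c' ∈ C, arens (jj c) η = jj c')}

/-- `M(C : D) = {η ∈ M(C) : ηD ⊆ D and Dη ⊆ D}`. -/
def multRel (C D : Set B) : Set (Bidual B) :=
  {η | η ∈ mult C ∧ (∀ d ∈ D, ∃ d' ∈ D, arens η (jj d) = jj d') ∧
    (∀ d ∈ D, ∃ d' ∈ D, arens (jj d) η = jj d')}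

/-- `pB**p ∩ B`, the hereditary subalgebra of `B` supported by `p`, as a subset of `B`. -/
def herB (p : Bidual B) : Set B :=
  {b : B | ∃ m : Bidual B, arens (arens p m) p = jj b}

/-- `pA**p ∩ A`, where `A**` is identified with `A^⊥⊥ ⊆ B**`, as a subset of `B`. -/
def herSub (A : Set B) (p : Bidual B) : Set B :=
  {a : B | a ∈ A ∧ ∃ m ∈ biann A, arens (arens p m) p = jj a}

/-- `p` is open in `A**`: `p` is a projection with `p ∈ (pA**p ∩ A)^⊥⊥`. -/
def IsOpenIn [StarRing B] [CStarRing B] [StarModule ℂ B] (A : Set B) (p : Bidual B) : Prop :=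
  IsProjE p ∧ p ∈ biann (herSub A p)

/-- The functional `μq : x ↦ μ(qx)` (products taken in `B**`). -/
def fmulQ (μ : Dl B) (q : Bidual B) : Dl B :=
  LinearMap.mkContinuous
    { toFun := fun x => arens q (jj x) μ
      map_add' := fun x y => by (try dsimp only); rw [map_add, arens_add_right]; simp
      map_smul' := fun c x => by
        (try dsimp only); rw [ContinuousLinearMap.map_smul, arens_smul_right]; simp }
    (‖q‖ * ‖μ‖)
    (fun x => by
      calc ‖arens q (jj x) μ‖ ≤ ‖arens q (jj x)‖ * ‖μ‖ := (arens q (jj x)).le_opNorm _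
      _ ≤ (‖q‖ * ‖jj x‖) * ‖μ‖ := by gcongr; exact arens_norm_le _ _
      _ ≤ (‖q‖ * ‖x‖) * ‖μ‖ := by gcongr; exact norm_jj_apply_le x
      _ = ‖q‖ * ‖μ‖ * ‖x‖ := by ring)

@[simp] lemma fmulQ_apply (μ : Dl B) (q : Bidual B) (x : B) :
    fmulQ μ q x = arens q (jj x) μ := rfl

/-- The functional `qμ : x ↦ μ(xq)` (products taken in `B**`). -/
def qmulF (q : Bidual B) (μ : Dl B) : Dl B :=
  LinearMap.mkContinuous
    { toFun := fun x => arens (jj x) q μ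
      map_add' := fun x y => by (try dsimp only); rw [map_add, arens_add_left]; simp
      map_smul' := fun c x => by
        (try dsimp only); rw [ContinuousLinearMap.map_smul, arens_smul_left]; simp }
    (‖q‖ * ‖μ‖)
    (fun x => by
      calc ‖arens (jj x) q μ‖ ≤ ‖arens (jj x) q‖ * ‖μ‖ := (arens (jj x) q).le_opNorm _
      _ ≤ (‖jj x‖ * ‖q‖) * ‖μ‖ := by gcongr; exact arens_norm_le _ _
      _ ≤ (‖x‖ * ‖q‖) * ‖μ‖ := by gcongr; exact norm_jj_apply_le x
      _ = ‖q‖ * ‖μ‖ * ‖x‖ := by ring)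

@[simp] lemma qmulF_apply (q : Bidual B) (μ : Dl B) (x : B) :
    qmulF q μ x = arens (jj x) q μ := rfl

/-- The functional `qμq : x ↦ μ(qxq)` (products taken in `B**`). -/
def sandQ (q : Bidual B) (μ : Dl B) : Dl B :=
  LinearMap.mkContinuous
    { toFun := fun x => arens (arens q (jj x)) q μ
      map_add' := fun x y => by
        (try dsimp only); rw [map_add, arens_add_right, arens_add_left]; simp
      map_smul' := fun c x => by
        (try dsimp only); rw [ContinuousLinearMap.map_smul, arens_smul_right, arens_smul_left]; simp }
    (‖q‖ * ‖q‖ * ‖μ‖)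
    (fun x => by
      calc ‖arens (arens q (jj x)) q μ‖ ≤ ‖arens (arens q (jj x)) q‖ * ‖μ‖ :=
        (arens (arens q (jj x)) q).le_opNorm _
      _ ≤ (‖arens q (jj x)‖ * ‖q‖) * ‖μ‖ := by gcongr; exact arens_norm_le _ _
      _ ≤ ((‖q‖ * ‖jj x‖) * ‖q‖) * ‖μ‖ := by gcongr; exact arens_norm_le _ _
      _ ≤ ((‖q‖ * ‖x‖) * ‖q‖) * ‖μ‖ := by gcongr; exact norm_jj_apply_le x
      _ = ‖q‖ * ‖q‖ * ‖μ‖ * ‖x‖ := by ring)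

@[simp] lemma sandQ_apply (q : Bidual B) (μ : Dl B) (x : B) :
    sandQ q μ x = arens (arens q (jj x)) q μ := rfl

/-- The subspace `qB = {qb : b ∈ B} ⊆ B**`. -/
def qBmod (q : Bidual B) : Submodule ℂ (Bidual B) where
  carrier := Set.range fun b : B => arens q (jj b)
  add_mem' := by
    rintro _ _ ⟨x, rfl⟩ ⟨y, rfl⟩
    exact ⟨x + y, by dsimp only; rw [map_add, arens_add_right]⟩
  zero_mem' := ⟨0, by dsimp only; rw [map_zero, arens_zero_right]⟩
  smul_mem' := by
    rintro c _ ⟨x, rfl⟩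
    exact ⟨c • x, by dsimp only; rw [ContinuousLinearMap.map_smul, arens_smul_right]⟩

/-- The subspace `Bq = {bq : b ∈ B} ⊆ B**`. -/
def Bqmod (q : Bidual B) : Submodule ℂ (Bidual B) where
  carrier := Set.range fun b : B => arens (jj b) q
  add_mem' := by
    rintro _ _ ⟨x, rfl⟩ ⟨y, rfl⟩
    exact ⟨x + y, by dsimp only; rw [map_add, arens_add_left]⟩
  zero_mem' := ⟨0, by dsimp only; rw [map_zero, arens_zero_left]⟩
  smul_mem' := by
    rintro c _ ⟨x, rfl⟩
    exact ⟨c • x, by dsimp only; rw [ContinuousLinearMap.map_smul, arens_smul_left]⟩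

/-- For `φ ∈ (qB)*`, the functional `φq ∈ B*` given by `x ↦ φ(qx)`. -/
def phiQ (q : Bidual B) (φ : NormedSpace.Dual ℂ (qBmod q)) : Dl B :=
  LinearMap.mkContinuous
    { toFun := fun x => φ ⟨arens q (jj x), ⟨x, rfl⟩⟩
      map_add' := fun x y => by
        have h : (⟨arens q (jj (x + y)), ⟨x + y, rfl⟩⟩ : qBmod q)
            = ⟨arens q (jj x), ⟨x, rfl⟩⟩ + ⟨arens q (jj y), ⟨y, rfl⟩⟩ := by
          apply Subtype.ext
          simp [map_add, arens_add_right]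
        (try dsimp only); rw [h, map_add]
      map_smul' := fun c x => by
        have h : (⟨arens q (jj (c • x)), ⟨c • x, rfl⟩⟩ : qBmod q)
            = c • ⟨arens q (jj x), ⟨x, rfl⟩⟩ := by
          apply Subtype.ext
          simp [arens_smul_right]
        (try dsimp only); rw [h, map_smul]; simp }
    (‖φ‖ * ‖q‖)
    (fun x => by
      calc ‖φ ⟨arens q (jj x), ⟨x, rfl⟩⟩‖
          ≤ ‖φ‖ * ‖(⟨arens q (jj x), ⟨x, rfl⟩⟩ : qBmod q)‖ := φ.le_opNorm _
      _ = ‖φ‖ * ‖arens q (jj x)‖ := rfl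
      _ ≤ ‖φ‖ * (‖q‖ * ‖jj x‖) := mul_le_mul_of_nonneg_left (arens_norm_le _ _) (norm_nonneg _)
      _ ≤ ‖φ‖ * (‖q‖ * ‖x‖) :=
        mul_le_mul_of_nonneg_left (mul_le_mul_of_nonneg_left (norm_jj_apply_le x) (norm_nonneg _))
          (norm_nonneg _)
      _ = ‖φ‖ * ‖q‖ * ‖x‖ := by ring)

@[simp] lemma phiQ_apply (q : Bidual B) (φ : NormedSpace.Dual ℂ (qBmod q)) (x : B) :
    phiQ q φ x = φ ⟨arens q (jj x), ⟨x, rfl⟩⟩ := rfl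

/-- For `φ ∈ (Bq)*`, the functional `qφ ∈ B*` given by `x ↦ φ(xq)`. -/
def qPhi (q : Bidual B) (φ : NormedSpace.Dual ℂ (Bqmod q)) : Dl B :=
  LinearMap.mkContinuous
    { toFun := fun x => φ ⟨arens (jj x) q, ⟨x, rfl⟩⟩
      map_add' := fun x y => by
        have h : (⟨arens (jj (x + y)) q, ⟨x + y, rfl⟩⟩ : Bqmod q)
            = ⟨arens (jj x) q, ⟨x, rfl⟩⟩ + ⟨arens (jj y) q, ⟨y, rfl⟩⟩ := by
          apply Subtype.ext
          simp [map_add, arens_add_left]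
        (try dsimp only); rw [h, map_add]
      map_smul' := fun c x => by
        have h : (⟨arens (jj (c • x)) q, ⟨c • x, rfl⟩⟩ : Bqmod q)
            = c • ⟨arens (jj x) q, ⟨x, rfl⟩⟩ := by
          apply Subtype.ext
          simp [arens_smul_left]
        (try dsimp only); rw [h, map_smul]; simp }
    (‖φ‖ * ‖q‖)
    (fun x => by
      calc ‖φ ⟨arens (jj x) q, ⟨x, rfl⟩⟩‖
          ≤ ‖φ‖ * ‖(⟨arens (jj x) q, ⟨x, rfl⟩⟩ : Bqmod q)‖ := φ.le_opNorm _
      _ = ‖φ‖ * ‖arens (jj x) q‖ := rfl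
      _ ≤ ‖φ‖ * (‖jj x‖ * ‖q‖) := mul_le_mul_of_nonneg_left (arens_norm_le _ _) (norm_nonneg _)
      _ ≤ ‖φ‖ * (‖x‖ * ‖q‖) :=
        mul_le_mul_of_nonneg_left (mul_le_mul_of_nonneg_right (norm_jj_apply_le x) (norm_nonneg _))
          (norm_nonneg _)
      _ = ‖φ‖ * ‖q‖ * ‖x‖ := by ring)

@[simp] lemma qPhi_apply (q : Bidual B) (φ : NormedSpace.Dual ℂ (Bqmod q)) (x : B) :
    qPhi q φ x = φ ⟨arens (jj x) q, ⟨x, rfl⟩⟩ := rfl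

/-- For `ψ ∈ B*`, the element `ψq` of `(qB)*` given by `qb ↦ ψ(qb)` (canonical pairing of
`B**` with `B*`). -/
def pairRestrict (q : Bidual B) (ψ : Dl B) : NormedSpace.Dual ℂ (qBmod q) :=
  LinearMap.mkContinuous
    { toFun := fun m => (m : Bidual B) ψ
      map_add' := fun m n => by simp
      map_smul' := fun c m => by simp }
    ‖ψ‖
    (fun m => by
      calc ‖(m : Bidual B) ψ‖ ≤ ‖(m : Bidual B)‖ * ‖ψ‖ := (m : Bidual B).le_opNorm _
      _ = ‖ψ‖ * ‖m‖ := by rw [mul_comm]; rfl)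

/-- Membership in the weak*-closure of a subset of `B**` (the `σ(B**, B*)`-topology). -/
def memWeakStarClosure (S : Set (Bidual B)) (m : Bidual B) : Prop :=
  StrongDual.toWeakDual m ∈ closure (⇑(StrongDual.toWeakDual) '' S)

/-- A subset of `B*` is weak*-closed (for the `σ(B*, B)`-topology). -/
def IsWeakStarClosed (S : Set (Dl B)) : Prop :=
  IsClosed (⇑(StrongDual.toWeakDual) '' S : Set (WeakDual ℂ B))

/-- `M(C)` (for `C` the whole algebra) as a submodule of the bidual. -/
def multSub (B : Type) [NonUnitalNormedRing B]
    [NormedSpace ℂ B] [IsScalarTower ℂ B B] [SMulCommClass ℂ B B] :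
    Submodule ℂ (Bidual B) where
  carrier := mult (Set.univ : Set B)
  add_mem' := by
    rintro η₁ η₂ ⟨h1, h2, h3⟩ ⟨h1', h2', h3'⟩
    refine ⟨fun f hf => ?_, fun c hc => ?_, fun c hc => ?_⟩
    · simp [h1 f hf, h1' f hf]
    · obtain ⟨c₁, -, hc₁⟩ := h2 c hc
      obtain ⟨c₂, -, hc₂⟩ := h2' c hc
      exact ⟨c₁ + c₂, trivial, by rw [arens_add_left, hc₁, hc₂, map_add]⟩
    · obtain ⟨c₁, -, hc₁⟩ := h3 c hc
      obtain ⟨c₂, -, hc₂⟩ := h3' c hc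
      exact ⟨c₁ + c₂, trivial, by rw [arens_add_right, hc₁, hc₂, map_add]⟩
  zero_mem' := by
    refine ⟨fun f _ => rfl, fun c _ => ⟨0, trivial, by rw [arens_zero_left, map_zero]⟩,
      fun c _ => ⟨0, trivial, by rw [arens_zero_right, map_zero]⟩⟩
  smul_mem' := by
    rintro s η ⟨h1, h2, h3⟩
    refine ⟨fun f hf => ?_, fun c hc => ?_, fun c hc => ?_⟩
    · simp [h1 f hf]
    · obtain ⟨c₁, -, hc₁⟩ := h2 c hc
      exact ⟨s • c₁, trivial, by rw [arens_smul_left, hc₁, ContinuousLinearMap.map_smul]⟩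
    · obtain ⟨c₁, -, hc₁⟩ := h3 c hc
      exact ⟨s • c₁, trivial, by rw [arens_smul_right, hc₁, ContinuousLinearMap.map_smul]⟩

/-- The transpose (dual map) of a continuous linear map. -/
def dualL {E F : Type} [NormedAddCommGroup E] [NormedSpace ℂ E]
    [NormedAddCommGroup F] [NormedSpace ℂ F] (T : E →L[ℂ] F) :
    NormedSpace.Dual ℂ F →L[ℂ] NormedSpace.Dual ℂ E :=
  (ContinuousLinearMap.compL ℂ E F ℂ).flip T

section Unital

variable {B : Type} [NormedRing B] [StarRing B] [CStarRing B] [NormedAlgebra ℂ B]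
  [StarModule ℂ B] [PartialOrder B] [StarOrderedRing B]

/-- `q` is a closed projection in `B**`: `q` is a projection and `1 - q` is open. -/
def IsClosedP (q : Bidual B) : Prop :=
  IsProjE q ∧ IsOpenP (jj (1 : B) - q)

end Unital

/-!
The weak*-closure of a subspace of `B**` is its double annihilator (Hahn–Banach in the weak*
topology, whose continuous functionals are the evaluations at points of `B*`), so (1) ↔ (2).
For a subalgebra `A`, the functionals annihilating `A` are stable under translation by elements
of `A`, which makes `A^⊥⊥` a subalgebra of `B**` for the Arens product containing `A`. Hence
(2) implies that `qa`, `aq`, `qaq` lie in `A^⊥⊥`, which is what (3)–(6) say after unfolding; the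
converse follows by taking `a = 1`, using `q = q²` for the two-sided condition.
-/

theorem _root_.WeakDual.mem_closure_submodule_iff {𝕜 F : Type*} [RCLike 𝕜]
    [AddCommGroup F] [TopologicalSpace F] [Module 𝕜 F] (W : Submodule 𝕜 (WeakDual 𝕜 F))
    (m : WeakDual 𝕜 F) :
    m ∈ closure (W : Set (WeakDual 𝕜 F)) ↔ ∀ f : F, (∀ w ∈ W, w f = 0) → m f = 0 := by
  refine ⟨fun hm f hf => ?_, fun h => ?_⟩
  · exact closure_minimal (s := (W : Set (WeakDual 𝕜 F))) hf
      (isClosed_eq (WeakBilin.eval_continuous _ f) continuous_const) hm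
  by_contra hm
  have : IsScalarTower ℝ 𝕜 (WeakDual 𝕜 F) := inferInstanceAs (IsScalarTower ℝ 𝕜 (F →L[𝕜] 𝕜))
  have : LocallyConvexSpace ℝ (WeakDual 𝕜 F) := WeakBilin.locallyConvexSpace
  obtain ⟨φ, u, hmu, hWu⟩ := RCLike.geometric_hahn_banach_point_closed (𝕜 := 𝕜)
    ((W.restrictScalars ℝ).convex.closure) isClosed_closure hm
  -- weak*-continuous functionals on `WeakDual 𝕜 F` are evaluations at points of `F`
  obtain ⟨f, rfl⟩ := LinearMap.dualEmbedding_surjective _ φ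
  replace hWu : ∀ w ∈ W, u < RCLike.re (w f) := fun w hw => hWu w (subset_closure hw)
  have hf : ∀ w ∈ W, w f = 0 := by
    intro w hw
    by_contra hwf
    have hu := hWu _ (W.smul_mem ((u : 𝕜) / w f) hw)
    rw [show (((u : 𝕜) / w f) • w) f = (u : 𝕜) / w f * w f from rfl, div_mul_cancel₀ _ hwf,
      RCLike.ofReal_re] at hu
    exact hu.false
  have hu := hWu 0 W.zero_mem
  rw [show (0 : WeakDual 𝕜 F) f = 0 from rfl, map_zero] at hu
  have hmf : RCLike.re (m f) < u := hmu
  rw [h f hf, map_zero] at hmf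
  linarith

section Annihilators

variable {B : Type} [NonUnitalNormedRing B] [NormedSpace ℂ B]

lemma memWeakStarClosure_jset_iff_mem_biann (p : Submodule ℂ B) (m : Bidual B) :
    memWeakStarClosure (jset (p : Set B)) m ↔ m ∈ biann (p : Set B) := by
  have himage : ⇑StrongDual.toWeakDual '' jset (p : Set B) =
      (p.map (StrongDual.toWeakDual.toLinearMap ∘ₗ (jj : B →L[ℂ] Bidual B).toLinearMap) :
        Set (WeakDual ℂ (Dl B))) := by
    rw [jset, Set.image_image]
    rfl
  rw [memWeakStarClosure, himage, WeakDual.mem_closure_submodule_iff]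
  simp only [Submodule.mem_map, forall_exists_index, and_imp, forall_apply_eq_imp_iff₂]
  rfl

lemma mem_preAnn_image_iff {S : Set B} {g : B → Bidual B} {μ : Dl B} :
    μ ∈ preAnn (g '' S) ↔ ∀ a ∈ S, g a μ = 0 :=
  Set.forall_mem_image

lemma subset_preAnn_image_iff {S : Set B} {g : B → Bidual B} :
    ann S ⊆ preAnn (g '' S) ↔ ∀ a ∈ S, g a ∈ biann S :=
  ⟨fun h a ha _ hμ => mem_preAnn_image_iff.1 (h hμ) a ha,
    fun h _ hμ => mem_preAnn_image_iff.2 fun a ha => h a ha _ hμ⟩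

lemma jj_mem_biann {S : Set B} {a : B} (ha : a ∈ S) : jj a ∈ biann S :=
  fun _ hμ => hμ a ha

variable [IsScalarTower ℂ B B] [SMulCommClass ℂ B B] {T : Type*} [SetLike T B] [MulMemClass T B]
  {A : T}

lemma fA_mem_ann {μ : Dl B} {a : B} (hμ : μ ∈ ann (A : Set B)) (ha : a ∈ A) :
    fA μ a ∈ ann (A : Set B) :=
  fun _ hb => hμ _ (mul_mem ha hb)

lemma nF_mem_ann {m : Bidual B} {μ : Dl B} (hm : m ∈ biann (A : Set B))
    (hμ : μ ∈ ann (A : Set B)) : nF m μ ∈ ann (A : Set B) :=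
  fun _ ha => hm _ (fA_mem_ann hμ ha)

lemma arens_mem_biann {m n : Bidual B} (hm : m ∈ biann (A : Set B))
    (hn : n ∈ biann (A : Set B)) : arens m n ∈ biann (A : Set B) :=
  fun _ hμ => hm _ (nF_mem_ann hn hμ)

end Annihilators

section UnitalAnnihilators

variable {B : Type} [NormedRing B] [NormedAlgebra ℂ B]

@[simp] lemma arens_jj_one (m : Bidual B) : arens m (jj (1 : B)) = m := by
  ext f
  change m (nF (jj 1) f) = m f
  congr 1
  ext x
  exact congrArg f (mul_one x)

@[simp] lemma jj_one_arens (m : Bidual B) : arens (jj (1 : B)) m = m := by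
  ext f
  change m (fA f 1) = m f
  congr 1
  ext x
  exact congrArg f (one_mul x)

variable {T : Type*} [SetLike T B] [SubmonoidClass T B] {A : T} {q : Bidual B}

lemma mem_biann_iff_forall_arens_jj_mem :
    q ∈ biann (A : Set B) ↔ ∀ a ∈ A, arens q (jj a) ∈ biann (A : Set B) :=
  ⟨fun hq _ ha => arens_mem_biann hq (jj_mem_biann ha),
    fun h => arens_jj_one q ▸ h 1 (one_mem A)⟩

lemma mem_biann_iff_forall_jj_arens_mem :
    q ∈ biann (A : Set B) ↔ ∀ a ∈ A, arens (jj a) q ∈ biann (A : Set B) :=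
  ⟨fun hq _ ha => arens_mem_biann (jj_mem_biann ha) hq,
    fun h => jj_one_arens q ▸ h 1 (one_mem A)⟩

lemma mem_biann_iff_forall_arens_jj_arens_mem (hq : arens q q = q) :
    q ∈ biann (A : Set B) ↔ ∀ a ∈ A, arens (arens q (jj a)) q ∈ biann (A : Set B) :=
  ⟨fun hq' _ ha => arens_mem_biann (arens_mem_biann hq' (jj_mem_biann ha)) hq',
    fun h => by simpa only [arens_jj_one, hq] using h 1 (one_mem A)⟩

end UnitalAnnihilators

section Statements

variable {B : Type} [NormedRing B] [StarRing B] [CStarRing B] [NormedAlgebra ℂ B]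
  [StarModule ℂ B] [CompleteSpace B] [PartialOrder B] [StarOrderedRing B]

theorem weak_star_closure_tfae_general
    (A : Subalgebra ℂ B)
    (q : Bidual B) (hq : IsProjE q) :
    [ memWeakStarClosure (jset (A : Set B)) q,
      q ∈ biann (A : Set B),
      ann (A : Set B) ⊆ preAnn ((fun a : B => arens q (jj a)) '' (A : Set B)),
      ann (A : Set B) ⊆ preAnn ((fun a : B => arens (jj a) q) '' (A : Set B)),
      ann (A : Set B) ⊆ preAnn ((fun a : B => arens (arens q (jj a)) q) '' (A : Set B)),
      ∀ μ ∈ ann (A : Set B), fmulQ μ q ∈ ann (A : Set B),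
      ∀ μ ∈ ann (A : Set B), qmulF q μ ∈ ann (A : Set B),
      ∀ μ ∈ ann (A : Set B), sandQ q μ ∈ ann (A : Set B) ].TFAE := by
  tfae_have 1 ↔ 2 := memWeakStarClosure_jset_iff_mem_biann (Subalgebra.toSubmodule A) q
  tfae_have 2 ↔ 3 := mem_biann_iff_forall_arens_jj_mem.trans subset_preAnn_image_iff.symm
  tfae_have 2 ↔ 4 := mem_biann_iff_forall_jj_arens_mem.trans subset_preAnn_image_iff.symm
  tfae_have 2 ↔ 5 :=
    (mem_biann_iff_forall_arens_jj_arens_mem hq.1).trans subset_preAnn_image_iff.symm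
  tfae_have 3 ↔ 6 := forall₂_congr fun _ _ => mem_preAnn_image_iff
  tfae_have 4 ↔ 7 := forall₂_congr fun _ _ => mem_preAnn_image_iff
  tfae_have 5 ↔ 8 := forall₂_congr fun _ _ => mem_preAnn_image_iff
  tfae_finish

/-- For a projection `q ∈ B**` the following are equivalent:
(1) `q` lies in the weak*-closure of `A` in `B**`; (2) `q ∈ A^⊥⊥`;
(3) `A^⊥ ⊆ (qA)_⊥` (resp. `A^⊥ ⊆ (Aq)_⊥`); (4) `A^⊥ ⊆ (qAq)_⊥`;
(5) `μ ∈ A^⊥ ⇒ μq ∈ A^⊥` (resp. `qμ ∈ A^⊥`); (6) `μ ∈ A^⊥ ⇒ qμq ∈ A^⊥`. -/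
theorem weak_star_closure_tfae
    (A : Subalgebra ℂ B) (hAclosed : IsClosed (A : Set B))
    (q : Bidual B) (hq : IsProjE q) :
    [ memWeakStarClosure (jset (A : Set B)) q,
      q ∈ biann (A : Set B),
      ann (A : Set B) ⊆ preAnn ((fun a : B => arens q (jj a)) '' (A : Set B)),
      ann (A : Set B) ⊆ preAnn ((fun a : B => arens (jj a) q) '' (A : Set B)),
      ann (A : Set B) ⊆ preAnn ((fun a : B => arens (arens q (jj a)) q) '' (A : Set B)),
      ∀ μ ∈ ann (A : Set B), fmulQ μ q ∈ ann (A : Set B),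
      ∀ μ ∈ ann (A : Set B), qmulF q μ ∈ ann (A : Set B),
      ∀ μ ∈ ann (A : Set B), sandQ q μ ∈ ann (A : Set B) ].TFAE :=
  weak_star_closure_tfae_general A q hq

end Statements

end OAPaper
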